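/- For any positive semidefinite matrix ρ^{XY} on a tensor product of finite-dimensional Hilbert spaces X and Y, the squared Schatten-2 norms satisfy |X|^{-1}·‖ρ^Y‖₂² ≤ ‖ρ^{XY}‖₂² ≤ |X|·‖ρ^Y‖₂², where ρ^Y is the partial trace over X. -/

import Mathlib

/-!
The lower bound is Cauchy–Schwarz applied to each entry `ρ^Y_{jj'} = ∑ᵢ ρ_{(i,j),(i,j')}`,
after which the off-diagonal blocks of `ρ` are simply discarded.

For the upper bound write `ρ = B†B`. Splitting `B v = ∑ᵢ Bᵢ vᵢ` along the `X`-blocks and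
applying Cauchy–Schwarz gives the operator inequality `ρ ≤ |X| (1 ⊗ ρ^Y)`. Pairing it with
`ρ ≥ 0` under the trace yields
`‖ρ‖₂² = Tr ρ² ≤ |X| Tr (ρ (1 ⊗ ρ^Y)) = |X| Tr (ρ^Y)² = |X| ‖ρ^Y‖₂²`.
-/

open Matrix MeasureTheory
open scoped ComplexOrder BigOperators

noncomputable section

variable {n : Type*} [Fintype n] [DecidableEq n]

/-- Frobenius / Schatten-2 norm. -/
def frob (M : Matrix n n ℂ) : ℝ := Real.sqrt (Mᴴ * M).trace.re

/-- The old `Matrix.PosSemidef.sqrt` (removed from Mathlib), with its old definition. -/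
def psdSqrt {A : Matrix n n ℂ} (hA : A.PosSemidef) : Matrix n n ℂ :=
  (hA.1.eigenvectorUnitary : Matrix n n ℂ) *
    Matrix.diagonal ((↑) ∘ (fun x : ℝ => Real.sqrt x) ∘ hA.1.eigenvalues) *
    (star hA.1.eigenvectorUnitary : Matrix n n ℂ)

/-- Trace / Schatten-1 norm. -/
def trNorm (M : Matrix n n ℂ) : ℝ :=
  (psdSqrt (Matrix.posSemidef_conjTranspose_mul_self M)).trace.re

/-- Real power of a Hermitian matrix via the spectral decomposition, sending zero
eigenvalues to zero (hence Moore–Penrose pseudoinverse powers for negative exponents);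
junk value `0` for non-Hermitian input. -/
def mpow (M : Matrix n n ℂ) (r : ℝ) : Matrix n n ℂ :=
  if h : M.IsHermitian then
    (h.eigenvectorUnitary : Matrix n n ℂ) *
      Matrix.diagonal (fun i =>
        ((if h.eigenvalues i = 0 then (0:ℝ) else h.eigenvalues i ^ r : ℝ) : ℂ)) *
      (h.eigenvectorUnitary : Matrix n n ℂ)ᴴ
  else 0

/-- Operator (Schatten-∞) norm. -/
def opNorm (M : Matrix n n ℂ) : ℝ := ‖(Matrix.toEuclideanLin M).toContinuousLinearMap‖

/-- Support of a matrix, i.e. its range as a linear map. -/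
def supp (M : Matrix n n ℂ) : Submodule ℂ (n → ℂ) := LinearMap.range M.mulVecLin

/-- Rényi-2 divergence (base 2). -/
def D2 (α β : Matrix n n ℂ) : ℝ :=
  2 * Real.logb 2 (frob (mpow β (-(1/4)) * α * mpow β (-(1/4))))

/-- Max (Rényi-∞) divergence (base 2). -/
def Dinf (α β : Matrix n n ℂ) : ℝ :=
  Real.logb 2 (opNorm (mpow β (-(1/2)) * α * mpow β (-(1/2))))

/-- Kronecker / tensor product of square matrices, on the product index type. -/
def kron {m : Type*} (P : Matrix n n ℂ) (Q : Matrix m m ℂ) : Matrix (n × m) (n × m) ℂ :=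
  fun z w => P z.1 w.1 * Q z.2 w.2

/-- Partial trace over the first tensor factor. -/
def ptrFst {X Y : Type*} [Fintype X] (ρ : Matrix (X × Y) (X × Y) ℂ) : Matrix Y Y ℂ :=
  fun j j' => ∑ i, ρ (i, j) (i, j')

section Frobenius

variable {m n : Type*} [Fintype m] [Fintype n]

lemma re_trace_conjTranspose_mul_self (M : Matrix m n ℂ) :
    (Mᴴ * M).trace.re = ∑ i, ∑ j, ‖M i j‖ ^ 2 := by
  simp only [trace, diag_apply, mul_apply, conjTranspose_apply, RCLike.star_def,
    Complex.conj_mul', Complex.re_sum, ← Complex.ofReal_pow, Complex.ofReal_re]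
  exact Finset.sum_comm

lemma frob_sq (M : Matrix n n ℂ) : frob M ^ 2 = ∑ i, ∑ j, ‖M i j‖ ^ 2 := by
  rw [frob, Real.sq_sqrt (by rw [re_trace_conjTranspose_mul_self]; positivity),
    re_trace_conjTranspose_mul_self]

lemma Matrix.IsHermitian.frob_sq {M : Matrix n n ℂ} (hM : M.IsHermitian) :
    frob M ^ 2 = (M * M).trace.re := by
  rw [frob, Real.sq_sqrt (by rw [re_trace_conjTranspose_mul_self]; positivity), hM.eq]

lemma star_dotProduct_conjTranspose_mul_self_mulVec (B : Matrix m n ℂ) (v : n → ℂ) :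
    star v ⬝ᵥ ((Bᴴ * B) *ᵥ v) = ((∑ k, ‖(B *ᵥ v) k‖ ^ 2 : ℝ) : ℂ) := by
  rw [← mulVec_mulVec, dotProduct_mulVec, ← star_mulVec]
  simp [dotProduct, Complex.conj_mul']

end Frobenius

lemma norm_sum_sq_le_card_mul {ι E : Type*} [SeminormedAddCommGroup E] (s : Finset ι)
    (f : ι → E) : ‖∑ i ∈ s, f i‖ ^ 2 ≤ s.card * ∑ i ∈ s, ‖f i‖ ^ 2 :=
  (pow_le_pow_left₀ (norm_nonneg _) (norm_sum_le s f) 2).trans sq_sum_le_card_mul_sum_sq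

section PosSemidef

variable {n : Type*} [Fintype n]

lemma Matrix.PosSemidef.exists_eq_conjTranspose_mul_self {A : Matrix n n ℂ}
    (hA : A.PosSemidef) : ∃ B : Matrix n n ℂ, A = Bᴴ * B := by
  classical
  open scoped MatrixOrder Matrix.Norms.L2Operator in
  exact CStarAlgebra.nonneg_iff_eq_star_mul_self.mp hA.nonneg

lemma Matrix.PosSemidef.re_trace_mul_nonneg {A B : Matrix n n ℂ} (hA : A.PosSemidef)
    (hB : B.PosSemidef) : 0 ≤ (A * B).trace.re := by
  obtain ⟨C, rfl⟩ := hA.exists_eq_conjTranspose_mul_self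
  rw [Matrix.mul_assoc, trace_mul_comm]
  exact (Complex.nonneg_iff.1 (hB.mul_mul_conjTranspose_same C).trace_nonneg).1

end PosSemidef

lemma Matrix.IsHermitian.kron_one {X Y : Type*} [DecidableEq X] {σ : Matrix Y Y ℂ}
    (hσ : σ.IsHermitian) : (kron (1 : Matrix X X ℂ) σ).IsHermitian := by
  ext z w
  simp only [conjTranspose_apply, kron, star_mul', hσ.apply, isHermitian_one.apply]

section PartialTrace

variable {X Y : Type*} [Fintype X]

lemma Matrix.IsHermitian.ptrFst {ρ : Matrix (X × Y) (X × Y) ℂ} (hρ : ρ.IsHermitian) :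
    (ptrFst ρ).IsHermitian := by
  ext j j'
  simp only [conjTranspose_apply, _root_.ptrFst, star_sum, hρ.apply]

lemma ptrFst_conjTranspose_mul_self {m : Type*} [Fintype m] (B : Matrix m (X × Y) ℂ) :
    ptrFst (Bᴴ * B) = ∑ i, (B.submatrix id (Prod.mk i))ᴴ * B.submatrix id (Prod.mk i) := by
  ext j j'
  simp [ptrFst, mul_apply, Matrix.sum_apply]

variable [Fintype Y]

theorem frob_ptrFst_sq_le (ρ : Matrix (X × Y) (X × Y) ℂ) :
    frob (ptrFst ρ) ^ 2 ≤ Fintype.card X * frob ρ ^ 2 := by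
  have hblocks : ∑ i, ∑ j, ∑ j', ‖ρ (i, j) (i, j')‖ ^ 2 ≤ frob ρ ^ 2 := by
    rw [frob_sq, Fintype.sum_prod_type]
    gcongr with i _ j _
    rw [Fintype.sum_prod_type]
    exact Finset.single_le_sum (f := fun i' => ∑ j', ‖ρ (i, j) (i', j')‖ ^ 2)
      (fun _ _ => by positivity) (Finset.mem_univ i)
  calc frob (ptrFst ρ) ^ 2 = ∑ j, ∑ j', ‖∑ i, ρ (i, j) (i, j')‖ ^ 2 := frob_sq _
    _ ≤ ∑ j, ∑ j', Fintype.card X * ∑ i, ‖ρ (i, j) (i, j')‖ ^ 2 := by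
      gcongr with j _ j' _
      exact norm_sum_sq_le_card_mul _ _
    _ = Fintype.card X * ∑ i, ∑ j, ∑ j', ‖ρ (i, j) (i, j')‖ ^ 2 := by
      simp only [Finset.mul_sum]
      exact Finset.sum_comm_cycle
    _ ≤ Fintype.card X * frob ρ ^ 2 := by gcongr

lemma mulVec_eq_sum_submatrix_mulVec {R m : Type*} [NonUnitalNonAssocSemiring R]
    (B : Matrix m (X × Y) R) (v : X × Y → R) :
    B *ᵥ v = ∑ i, B.submatrix id (Prod.mk i) *ᵥ fun j => v (i, j) := by
  ext k
  simp [mulVec, dotProduct, Fintype.sum_prod_type, Finset.sum_apply]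

lemma sum_norm_sq_mulVec_le_card_mul {m : Type*} [Fintype m] (B : Matrix m (X × Y) ℂ)
    (v : X × Y → ℂ) :
    ∑ k, ‖(B *ᵥ v) k‖ ^ 2 ≤ Fintype.card X *
      ∑ i, ∑ i', ∑ k, ‖(B.submatrix id (Prod.mk i') *ᵥ fun j => v (i, j)) k‖ ^ 2 := by
  set w : X → X → m → ℂ := fun i i' => B.submatrix id (Prod.mk i') *ᵥ fun j => v (i, j)
  calc ∑ k, ‖(B *ᵥ v) k‖ ^ 2 = ∑ k, ‖∑ i, w i i k‖ ^ 2 := by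
        simp only [w, mulVec_eq_sum_submatrix_mulVec B v, Finset.sum_apply]
    _ ≤ ∑ k, Fintype.card X * ∑ i, ‖w i i k‖ ^ 2 := by
      gcongr with k
      exact norm_sum_sq_le_card_mul _ _
    _ = Fintype.card X * ∑ i, ∑ k, ‖w i i k‖ ^ 2 := by
      rw [← Finset.mul_sum, Finset.sum_comm]
    _ ≤ Fintype.card X * ∑ i, ∑ i', ∑ k, ‖w i i' k‖ ^ 2 := by
      gcongr with i
      exact Finset.single_le_sum (f := fun i' => ∑ k, ‖w i i' k‖ ^ 2)
        (fun _ _ => by positivity) (Finset.mem_univ i)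

variable [DecidableEq X]

lemma trace_mul_kron_one (ρ : Matrix (X × Y) (X × Y) ℂ) (σ : Matrix Y Y ℂ) :
    (ρ * kron 1 σ).trace = (ptrFst ρ * σ).trace := by
  simp only [trace, diag_apply, mul_apply, kron, one_apply, Fintype.sum_prod_type, ptrFst,
    Finset.sum_mul, ite_mul, one_mul, zero_mul, mul_ite, mul_zero, Finset.sum_ite_irrel,
    Finset.sum_const_zero, Finset.sum_ite_eq', Finset.mem_univ, if_true]
  exact Finset.sum_comm.trans (Finset.sum_congr rfl fun _ _ => Finset.sum_comm)

lemma star_dotProduct_kron_one_mulVec (σ : Matrix Y Y ℂ) (v : X × Y → ℂ) :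
    star v ⬝ᵥ (kron 1 σ *ᵥ v) =
      ∑ i, star (fun j => v (i, j)) ⬝ᵥ (σ *ᵥ fun j => v (i, j)) := by
  simp only [dotProduct, mulVec, kron, one_apply, Fintype.sum_prod_type, Finset.mul_sum,
    ite_mul, one_mul, zero_mul, Finset.sum_ite_irrel, Finset.sum_const_zero,
    Finset.sum_ite_eq, Finset.mem_univ, if_true, Pi.star_apply]

theorem Matrix.PosSemidef.card_smul_kron_one_ptrFst_sub {ρ : Matrix (X × Y) (X × Y) ℂ}
    (hρ : ρ.PosSemidef) : ((Fintype.card X : ℂ) • kron 1 (ptrFst ρ) - ρ).PosSemidef := by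
  refine .of_dotProduct_mulVec_nonneg ((hρ.isHermitian.ptrFst.kron_one.smul
    (IsSelfAdjoint.natCast _)).sub hρ.isHermitian) fun v => ?_
  obtain ⟨B, rfl⟩ := hρ.exists_eq_conjTranspose_mul_self
  simp only [sub_mulVec, dotProduct_sub, smul_mulVec, dotProduct_smul,
    star_dotProduct_kron_one_mulVec, ptrFst_conjTranspose_mul_self, sum_mulVec, dotProduct_sum,
    star_dotProduct_conjTranspose_mul_self_mulVec, sub_nonneg, smul_eq_mul]
  exact_mod_cast sum_norm_sq_mulVec_le_card_mul B v

theorem frob_sq_le_card_mul_frob_ptrFst_sq {ρ : Matrix (X × Y) (X × Y) ℂ}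
    (hρ : ρ.PosSemidef) : frob ρ ^ 2 ≤ Fintype.card X * frob (ptrFst ρ) ^ 2 := by
  have h := hρ.re_trace_mul_nonneg hρ.card_smul_kron_one_ptrFst_sub
  rw [Matrix.mul_sub, trace_sub, mul_smul_comm, trace_smul, trace_mul_kron_one] at h
  rw [hρ.isHermitian.frob_sq, hρ.isHermitian.ptrFst.frob_sq]
  simpa [sub_nonneg] using h

end PartialTrace

theorem frob_ptrace_bounds_general {X Y : Type*} [Fintype X] [DecidableEq X] [Fintype Y]
    (ρ : Matrix (X × Y) (X × Y) ℂ) (hρ : ρ.PosSemidef) :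
    (Fintype.card X : ℝ)⁻¹ * frob (ptrFst ρ) ^ 2 ≤ frob ρ ^ 2 ∧
      frob ρ ^ 2 ≤ (Fintype.card X : ℝ) * frob (ptrFst ρ) ^ 2 :=
  ⟨inv_mul_le_of_le_mul₀ (by positivity) (by positivity) (frob_ptrFst_sq_le ρ),
    frob_sq_le_card_mul_frob_ptrFst_sq hρ⟩

/-- Dimension bounds for the squared Frobenius norm of a partial trace of a PSD matrix:
`|X|⁻¹ ‖ρ^Y‖₂² ≤ ‖ρ^{XY}‖₂² ≤ |X| ‖ρ^Y‖₂²`. -/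
theorem frob_ptrace_bounds {X Y : Type*} [Fintype X] [DecidableEq X] [Fintype Y] [DecidableEq Y]
    (ρ : Matrix (X × Y) (X × Y) ℂ) (hρ : ρ.PosSemidef) :
    (Fintype.card X : ℝ)⁻¹ * frob (ptrFst ρ) ^ 2 ≤ frob ρ ^ 2 ∧
      frob ρ ^ 2 ≤ (Fintype.card X : ℝ) * frob (ptrFst ρ) ^ 2 :=
  frob_ptrace_bounds_general ρ hρ
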